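/- If D is a digraph with n vertices and a arcs, then ‖D_α‖_* ≤ √(n[(1-α)² a + α² Σ_{i=1}^n (d_i⁺)²]), with equality if and only if D is a discrete digraph, or α = 0 and D is a direct sum of directed cycles. -/

import Mathlib

open Matrix Real

/-- Adjacency matrix (over ℝ) of a digraph given by an arc relation on `Fin n`. -/
def adjMat {n : ℕ} (R : Fin n → Fin n → Prop) [DecidableRel R] :
    Matrix (Fin n) (Fin n) ℝ :=
  Matrix.of fun i j => if R i j then 1 else 0

/-- Outdegree of a vertex. -/
def outdeg {n : ℕ} (R : Fin n → Fin n → Prop) [DecidableRel R] (i : Fin n) : ℕ :=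
  (Finset.univ.filter fun j => R i j).card

/-- Indegree of a vertex. -/
def indeg {n : ℕ} (R : Fin n → Fin n → Prop) [DecidableRel R] (j : Fin n) : ℕ :=
  (Finset.univ.filter fun i => R i j).card

/-- The `A_α` matrix of a digraph: `α Δ⁺ + (1-α) A`. -/
noncomputable def Amat {n : ℕ} (α : ℝ) (R : Fin n → Fin n → Prop) [DecidableRel R] :
    Matrix (Fin n) (Fin n) ℝ :=
  α • Matrix.diagonal (fun i => (outdeg R i : ℝ)) + (1 - α) • adjMat R

/-- The singular values of a real square matrix `M`: the nonnegative square roots of the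
eigenvalues of `M Mᵀ` (`Mᴴ = Mᵀ` over ℝ). -/
noncomputable def singVals {m : Type*} [Fintype m] [DecidableEq m]
    (M : Matrix m m ℝ) (i : m) : ℝ :=
  Real.sqrt ((Matrix.isHermitian_mul_conjTranspose_self M).eigenvalues i)

/-- Trace norm: sum of the singular values. -/
noncomputable def traceNorm {m : Type*} [Fintype m] [DecidableEq m]
    (M : Matrix m m ℝ) : ℝ :=
  ∑ i, singVals M i

/-- Spectral norm: the largest singular value. -/
noncomputable def specNorm {m : Type*} [Fintype m] [DecidableEq m]
    (M : Matrix m m ℝ) : ℝ :=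
  ⨆ i, singVals M i

/-!
By Cauchy–Schwarz, `(∑ σᵢ)² ≤ n ∑ σᵢ²`, and `∑ σᵢ² = tr (A_α A_αᵀ)` is the sum of the squared
entries of `A_α`, which is `(1-α)² a + α² ∑ (dᵢ⁺)²` when there are no loops. Equality holds iff
all singular values agree, i.e. iff `A_α A_αᵀ = c I`. As `A_α` is entrywise nonnegative, its rows
then have pairwise disjoint supports. An arc `p → q` gives `c ≥ (1-α)² > 0`, so every row is
nonzero and every outdegree positive; column `q` carries `1-α` in row `p` and `α d_q⁺` in row
`q`, forcing `α = 0`. Then every vertex has an out-neighbour and no two vertices share one, so the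
arcs form a fixed-point-free permutation.
-/

namespace Matrix.IsHermitian

variable {𝕜 n : Type*} [RCLike 𝕜] [Fintype n] [DecidableEq n] {A : Matrix n n 𝕜}

theorem eigenvalues_eq_const_iff (hA : A.IsHermitian) (c : ℝ) :
    (∀ i, hA.eigenvalues i = c) ↔ A = (c : 𝕜) • 1 := by
  constructor
  · intro h
    have hdiag : diagonal (RCLike.ofReal ∘ hA.eigenvalues) = (c : 𝕜) • (1 : Matrix n n 𝕜) := by
      ext i j
      simp [diagonal_apply, one_apply, h]
    rw [hA.spectral_theorem, hdiag, Unitary.conjStarAlgAut_apply, mul_smul_comm, smul_mul_assoc,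
      mul_one, Unitary.mul_star_self_of_mem (Subtype.prop _)]
  · intro h i
    have : Nonempty n := ⟨i⟩
    have hmem := hA.eigenvalues_mem_spectrum_real i
    generalize hA.eigenvalues i = x at hmem
    subst h
    rwa [← RCLike.real_smul_eq_coe_smul, ← Algebra.algebraMap_eq_smul_one,
      spectrum.scalar_eq] at hmem

end Matrix.IsHermitian

theorem sq_sum_eq_card_mul_sum_sq_iff {ι : Type*} [Fintype ι] (f : ι → ℝ) :
    (∑ i, f i) ^ 2 = Fintype.card ι * ∑ i, f i ^ 2 ↔ ∀ i j, f i = f j := by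
  have key : ∑ i, ∑ j, (f i - f j) ^ 2 =
      2 * (Fintype.card ι * ∑ i, f i ^ 2 - (∑ i, f i) ^ 2) := by
    simp only [sub_sq, Finset.sum_add_distrib, Finset.sum_sub_distrib, Finset.sum_const,
      Finset.card_univ, nsmul_eq_mul, ← Finset.mul_sum, ← Finset.sum_mul, mul_assoc]
    ring
  have hnn : ∀ i ∈ Finset.univ, 0 ≤ ∑ j, (f i - f j) ^ 2 := fun i _ =>
    Finset.sum_nonneg fun j _ => sq_nonneg _
  rw [← sub_eq_zero, ← neg_eq_zero, neg_sub, ← mul_eq_zero_iff_left two_ne_zero, ← key,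
    Finset.sum_eq_zero_iff_of_nonneg hnn]
  simp only [Finset.mem_univ, forall_const,
    Finset.sum_eq_zero_iff_of_nonneg (fun j _ => sq_nonneg _)]
  simp [sub_eq_zero]

section TraceNorm

variable {m : Type*} [Fintype m] [DecidableEq m] (M : Matrix m m ℝ)

theorem singVals_nonneg (i : m) : 0 ≤ singVals M i :=
  Real.sqrt_nonneg _

theorem sq_singVals (i : m) :
    singVals M i ^ 2 = (isHermitian_mul_conjTranspose_self M).eigenvalues i :=
  Real.sq_sqrt ((posSemidef_self_mul_conjTranspose M).eigenvalues_nonneg i)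

theorem sum_sq_singVals : ∑ i, singVals M i ^ 2 = ∑ i, ∑ j, M i j ^ 2 := by
  have htr := (isHermitian_mul_conjTranspose_self M).trace_eq_sum_eigenvalues
  simp only [sq_singVals, RCLike.ofReal_real_eq_id, id] at htr ⊢
  rw [← htr]
  simp [trace, mul_apply, sq]

theorem traceNorm_nonneg : 0 ≤ traceNorm M :=
  Finset.sum_nonneg fun i _ => singVals_nonneg M i

theorem traceNorm_le_sqrt : traceNorm M ≤ √(Fintype.card m * ∑ i, ∑ j, M i j ^ 2) := by
  rw [← sum_sq_singVals]
  apply Real.le_sqrt_of_sq_le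
  simpa [traceNorm] using sq_sum_le_card_mul_sum_sq (s := Finset.univ) (f := singVals M)

theorem traceNorm_eq_sqrt_iff :
    traceNorm M = √(Fintype.card m * ∑ i, ∑ j, M i j ^ 2) ↔ ∃ c : ℝ, M * Mᴴ = c • 1 := by
  have hH := isHermitian_mul_conjTranspose_self M
  have hsingVals_eq_iff :
      ∀ i j, singVals M i = singVals M j ↔ hH.eigenvalues i = hH.eigenvalues j := fun i j => by
    rw [← sq_singVals, ← sq_singVals, sq_eq_sq₀ (singVals_nonneg M i) (singVals_nonneg M j)]
  rw [← sum_sq_singVals, eq_comm, Real.sqrt_eq_iff_eq_sq (by positivity) (traceNorm_nonneg M),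
    eq_comm, traceNorm, sq_sum_eq_card_mul_sum_sq_iff]
  simp only [hsingVals_eq_iff]
  constructor
  · intro h
    cases isEmpty_or_nonempty m with
    | inl _ => exact ⟨0, Subsingleton.elim _ _⟩
    | inr hm =>
      obtain ⟨i₀⟩ := hm
      exact ⟨_, (hH.eigenvalues_eq_const_iff _).mp fun i => h i i₀⟩
  · rintro ⟨c, hc⟩ i j
    have hconst := (hH.eigenvalues_eq_const_iff c).mpr hc
    rw [hconst i, hconst j]

end TraceNorm

theorem Relator.LeftUnique.exists_perm_of_leftTotal {ι : Type*} [Finite ι] {R : ι → ι → Prop}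
    (hin : Relator.LeftUnique R) (hout : Relator.LeftTotal R) :
    ∃ σ : Equiv.Perm ι, ∀ i j, R i j ↔ j = σ i := by
  choose g hg using hout
  have hbij : Function.Bijective g :=
    Finite.injective_iff_bijective.mp fun i j hij => hin (hg i) (hij ▸ hg j)
  refine ⟨Equiv.ofBijective g hbij, fun i j => ⟨fun hij => ?_, fun h => h ▸ hg i⟩⟩
  obtain ⟨i', rfl⟩ := hbij.2 j
  rw [hin hij (hg i')]
  rfl

section Digraph

variable {n : ℕ} {R : Fin n → Fin n → Prop} [DecidableRel R] {α : ℝ}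

theorem Amat_apply_self (hirr : ∀ i, ¬ R i i) (i : Fin n) :
    Amat α R i i = α * outdeg R i := by
  simp [Amat, adjMat, hirr i]

theorem Amat_apply_of_ne {i j : Fin n} (hij : i ≠ j) :
    Amat α R i j = if R i j then 1 - α else 0 := by
  simp [Amat, adjMat, diagonal_apply_ne _ hij]

theorem Amat_nonneg (hα0 : 0 ≤ α) (hα1 : α ≤ 1) (i j : Fin n) : 0 ≤ Amat α R i j := by
  simp only [Amat, adjMat, Matrix.add_apply, Matrix.smul_apply, diagonal_apply, of_apply,
    smul_eq_mul]
  have : 0 ≤ 1 - α := by linarith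
  split_ifs <;> positivity

theorem Amat_zero : Amat 0 R = adjMat R := by
  simp [Amat]

theorem sum_sq_Amat_row (hirr : ∀ i, ¬ R i i) (i : Fin n) :
    ∑ j, Amat α R i j ^ 2 = α ^ 2 * (outdeg R i : ℝ) ^ 2 + (1 - α) ^ 2 * outdeg R i := by
  have hsplit : ∀ j, Amat α R i j ^ 2 =
      (if i = j then (α * outdeg R i) ^ 2 else 0) + if R i j then (1 - α) ^ 2 else 0 := by
    intro j
    by_cases hij : i = j
    · subst hij
      simp [Amat_apply_self hirr, hirr i]
    · simp [Amat_apply_of_ne hij, hij, apply_ite (· ^ 2)]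
  simp only [hsplit, Finset.sum_add_distrib, Finset.sum_ite_eq, Finset.mem_univ, if_true,
    Finset.sum_ite, Finset.sum_const_zero, add_zero, Finset.sum_const, nsmul_eq_mul, outdeg]
  ring

theorem sum_sq_Amat (hirr : ∀ i, ¬ R i i) :
    ∑ i, ∑ j, Amat α R i j ^ 2 =
      (1 - α) ^ 2 * ∑ i, (outdeg R i : ℝ) + α ^ 2 * ∑ i, (outdeg R i : ℝ) ^ 2 := by
  simp only [sum_sq_Amat_row hirr, Finset.sum_add_distrib, ← Finset.mul_sum]
  ring

theorem eq_zero_and_exists_perm_of_Amat_mul_conjTranspose_eq_smul_one (hirr : ∀ i, ¬ R i i)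
    (hα0 : 0 ≤ α) (hα1 : α < 1) {c : ℝ} (hc : Amat α R * (Amat α R)ᴴ = c • 1) {p q : Fin n}
    (hpq : R p q) :
    α = 0 ∧ ∃ σ : Equiv.Perm (Fin n), (∀ i, σ i ≠ i) ∧ ∀ i j, R i j ↔ j = σ i := by
  have hβ : 0 < 1 - α := by linarith
  have hMM : ∀ i j, ∑ k, Amat α R i k * Amat α R j k = if i = j then c else 0 := fun i j => by
    simpa [mul_apply, one_apply] using congrFun (congrFun hc i) j
  have horth : ∀ i j, i ≠ j → ∀ k, Amat α R i k * Amat α R j k = 0 := fun i j hij k =>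
    (Finset.sum_eq_zero_iff_of_nonneg fun k _ =>
        mul_nonneg (Amat_nonneg hα0 hα1.le i k) (Amat_nonneg hα0 hα1.le j k)).mp
      ((hMM i j).trans (if_neg hij)) k (Finset.mem_univ k)
  have hrow : ∀ i, α ^ 2 * (outdeg R i : ℝ) ^ 2 + (1 - α) ^ 2 * outdeg R i = c := fun i => by
    rw [← sum_sq_Amat_row hirr]
    simpa [← sq] using hMM i i
  have hp : 0 < outdeg R p := Finset.card_pos.mpr ⟨q, by simpa using hpq⟩
  have hout : ∀ i, 0 < outdeg R i := by
    intro i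
    by_contra! h0
    have hdp : (1 : ℝ) ≤ outdeg R p := by exact_mod_cast hp
    have hc0 : c = 0 := by simpa [Nat.le_zero.mp h0] using (hrow i).symm
    have hcp := hrow p
    nlinarith [sq_nonneg (α * outdeg R p), mul_pos hβ hβ]
  have hpq_ne : p ≠ q := fun h => hirr p (h ▸ hpq)
  have hα : α = 0 := by
    have h := horth p q hpq_ne q
    rw [Amat_apply_of_ne hpq_ne, if_pos hpq, Amat_apply_self hirr] at h
    simpa [hβ.ne', (hout q).ne'] using h
  have hin : Relator.LeftUnique R := by
    intro i j k hik hjk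
    by_contra hij
    have h := horth i j hij k
    have hik_ne : i ≠ k := fun h => hirr k (h ▸ hik)
    have hjk_ne : j ≠ k := fun h => hirr k (h ▸ hjk)
    rw [Amat_apply_of_ne hik_ne, Amat_apply_of_ne hjk_ne, if_pos hik, if_pos hjk] at h
    exact hβ.ne' (mul_self_eq_zero.mp h)
  have hnbr : Relator.LeftTotal R := fun i =>
    (Finset.card_pos.mp (hout i)).imp fun _ hj => (Finset.mem_filter.mp hj).2
  obtain ⟨σ, hσ⟩ := hin.exists_perm_of_leftTotal hnbr
  exact ⟨hα, σ, fun i hi => hirr i ((hσ i i).mpr hi.symm), hσ⟩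

theorem Amat_eq_zero_of_forall_not (h : ∀ i j, ¬ R i j) : Amat α R = 0 := by
  have hdeg : ∀ i, outdeg R i = 0 := fun i => by simp [outdeg, h i]
  ext i j
  simp [Amat, adjMat, hdeg, h i j]

theorem adjMat_mul_conjTranspose_of_perm {σ : Equiv.Perm (Fin n)}
    (hσ : ∀ i j, R i j ↔ j = σ i) : adjMat R * (adjMat R)ᴴ = 1 := by
  ext i j
  simp [adjMat, mul_apply, one_apply, hσ, σ.injective.eq_iff, eq_comm]

theorem exists_Amat_mul_conjTranspose_eq_smul_one_iff (hirr : ∀ i, ¬ R i i) (hα0 : 0 ≤ α)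
    (hα1 : α < 1) :
    (∃ c : ℝ, Amat α R * (Amat α R)ᴴ = c • 1) ↔
      (∀ i j, ¬ R i j) ∨
        (α = 0 ∧ ∃ σ : Equiv.Perm (Fin n), (∀ i, σ i ≠ i) ∧ ∀ i j, R i j ↔ j = σ i) := by
  constructor
  · rintro ⟨c, hc⟩
    by_cases harc : ∃ p q, R p q
    · obtain ⟨p, q, hpq⟩ := harc
      exact Or.inr
        (eq_zero_and_exists_perm_of_Amat_mul_conjTranspose_eq_smul_one hirr hα0 hα1 hc hpq)
    · exact Or.inl fun i j hij => harc ⟨i, j, hij⟩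
  · rintro (h | ⟨rfl, σ, -, hσ⟩)
    · exact ⟨0, by simp [Amat_eq_zero_of_forall_not h]⟩
    · exact ⟨1, by rw [Amat_zero, adjMat_mul_conjTranspose_of_perm hσ, one_smul]⟩

end Digraph

/-- McClelland-type upper bound: `‖D_α‖_* ≤ √(n[(1-α)² a + α² Σ(d_i⁺)²])`, with equality iff
`D` is discrete, or `α = 0` and `D` is a direct sum of directed cycles (i.e. the arc relation
is the graph of a fixed-point-free permutation). -/
theorem stmt_16 (n : ℕ) (R : Fin n → Fin n → Prop) [DecidableRel R]
    (hirr : ∀ i, ¬ R i i) (α : ℝ) (hα0 : 0 ≤ α) (hα1 : α < 1)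
    (a : ℕ) (ha : a = ∑ i, outdeg R i) :
    traceNorm (Amat α R) ≤
        Real.sqrt (n * ((1 - α) ^ 2 * a + α ^ 2 * ∑ i, ((outdeg R i : ℝ)) ^ 2)) ∧
      (traceNorm (Amat α R) =
          Real.sqrt (n * ((1 - α) ^ 2 * a + α ^ 2 * ∑ i, ((outdeg R i : ℝ)) ^ 2)) ↔
        (∀ i j, ¬ R i j) ∨
        (α = 0 ∧ ∃ σ : Equiv.Perm (Fin n), (∀ i, σ i ≠ i) ∧ ∀ i j, R i j ↔ j = σ i)) := by
  have hfrob : ∑ i, ∑ j, Amat α R i j ^ 2 =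
      (1 - α) ^ 2 * a + α ^ 2 * ∑ i, (outdeg R i : ℝ) ^ 2 := by
    rw [sum_sq_Amat hirr, ha, Nat.cast_sum]
  have hbound := traceNorm_le_sqrt (Amat α R)
  have heq := traceNorm_eq_sqrt_iff (Amat α R)
  rw [hfrob, Fintype.card_fin] at hbound heq
  exact ⟨hbound, heq.trans (exists_Amat_mul_conjTranspose_eq_smul_one_iff hirr hα0 hα1)⟩
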